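/- Partial correctness of constraint resolution: if the constraint resolution algorithm, run on constraint set C with empty initial substitution, returns a substitution σ, then σ is a solution for C, i.e., σ satisfies every equality and every subtyping constraint in C. -/
import Mathlib


/-! The constraint resolution algorithm of the paper (Figures 4 and 5):
constraint sets are finite sets of equality (`=_s`) and subtyping (`<:_s`)
constraints between types; the algorithm rewrites pairs (constraint set,
accumulated substitution) using rules (1)-(14). -/

inductive Ty (S F V : Type) where
  | tvar : V → Ty S F V
  | sort : S → Option F → Ty S F V
  | wt : Ty S F V
deriving DecidableEq

inductive Constr (S F V : Type) where
  | eq : Ty S F V → Ty S F V → Constr S F V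
  | sub : Ty S F V → Ty S F V → Constr S F V
deriving DecidableEq

variable {S F V : Type} [DecidableEq S] [DecidableEq F] [DecidableEq V]

/-- The singleton substitution `[α ↦ τ]`. -/
def sub1 (a : V) (τ : Ty S F V) : V → Ty S F V :=
  fun v => if v = a then τ else .tvar v

def applyTy (σ : V → Ty S F V) : Ty S F V → Ty S F V
  | .tvar a => σ a
  | .sort s g => .sort s g
  | .wt => .wt

def mapC (σ : V → Ty S F V) : Constr S F V → Constr S F V
  | .eq t1 t2 => .eq (applyTy σ t1) (applyTy σ t2)
  | .sub t1 t2 => .sub (applyTy σ t1) (applyTy σ t2)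

/-- Composition of substitutions. -/
def comp (σ1 σ2 : V → Ty S F V) : V → Ty S F V :=
  fun v => applyTy σ1 (σ2 v)

/-- `α` occurs in the constraint `c` (types are flat, so occurrence is being
one of the two sides). -/
def occursC (a : V) : Constr S F V → Prop
  | .eq t1 t2 => t1 = .tvar a ∨ t2 = .tvar a
  | .sub t1 t2 => t1 = .tvar a ∨ t2 = .tvar a

def Constr.isSub : Constr S F V → Bool
  | .sub _ _ => true
  | _ => false

/-- A state of the algorithm: the current constraint set and the accumulated
substitution. -/
abbrev RState (S F V : Type) := Finset (Constr S F V) × (V → Ty S F V)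

/-- One step of the constraint resolution algorithm (rules (1)-(14) of
Figure 5), parameterized by the decorated-sort subtyping relation `ds`
declared by the context `Γ` (its reflexive-transitive closure). -/
inductive Step (ds : Ty S F V → Ty S F V → Prop) :
    RState S F V → RState S F V → Prop where
  | r1 {τ C' σ} : Constr.eq τ τ ∉ C' →
      Step ds (insert (.eq τ τ) C', σ) (C', σ)
  | r2 {τ C' σ} : Constr.sub τ τ ∉ C' →
      Step ds (insert (.sub τ τ) C', σ) (C', σ)
  | r3 {s1 g1 s2 g2 C' σ} :
      Constr.sub (.sort s1 g1) (.sort s2 g2) ∉ C' →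
      ds (.sort s1 g1) (.sort s2 g2) →
      Step ds (insert (.sub (.sort s1 g1) (.sort s2 g2)) C', σ) (C', σ)
  | r4 {a τ C' σ} : Constr.eq (.tvar a) τ ∉ C' →
      Step ds (insert (.eq (.tvar a) τ) C', σ)
        (C'.image (mapC (sub1 a τ)), comp (sub1 a τ) σ)
  | r5 {a τ C' σ} : Constr.eq τ (.tvar a) ∉ C' →
      Step ds (insert (.eq τ (.tvar a)) C', σ)
        (C'.image (mapC (sub1 a τ)), comp (sub1 a τ) σ)
  | r6 {s1 g1 s2 g2 s a C' σ} :
      Constr.sub (.sort s1 g1) (.tvar a) ≠ Constr.sub (.sort s2 g2) (.tvar a) →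
      Constr.sub (.sort s1 g1) (.tvar a) ∉ C' →
      Constr.sub (.sort s2 g2) (.tvar a) ∉ C' →
      ds (.sort s1 g1) (.sort s none) → ds (.sort s2 g2) (.sort s none) →
      Step ds
        (insert (.sub (.sort s1 g1) (.tvar a))
          (insert (.sub (.sort s2 g2) (.tvar a)) C'), σ)
        (insert (.sub (.sort s none) (.tvar a)) C', σ)
  | r7a {s1 g1 s2 g2 a C' σ} :
      Constr.sub (.tvar a) (.sort s1 g1) ≠ Constr.sub (.tvar a) (.sort s2 g2) →
      Constr.sub (.tvar a) (.sort s1 g1) ∉ C' →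
      Constr.sub (.tvar a) (.sort s2 g2) ∉ C' →
      ds (.sort s1 g1) (.sort s2 g2) →
      Step ds
        (insert (.sub (.tvar a) (.sort s1 g1))
          (insert (.sub (.tvar a) (.sort s2 g2)) C'), σ)
        (insert (.sub (.tvar a) (.sort s1 g1)) C', σ)
  | r7b {s1 g1 s2 g2 a C' σ} :
      Constr.sub (.tvar a) (.sort s1 g1) ≠ Constr.sub (.tvar a) (.sort s2 g2) →
      Constr.sub (.tvar a) (.sort s1 g1) ∉ C' →
      Constr.sub (.tvar a) (.sort s2 g2) ∉ C' →
      ds (.sort s2 g2) (.sort s1 g1) →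
      Step ds
        (insert (.sub (.tvar a) (.sort s1 g1))
          (insert (.sub (.tvar a) (.sort s2 g2)) C'), σ)
        (insert (.sub (.tvar a) (.sort s2 g2)) C', σ)
  | r8 {τ1 τ2 C' σ} :
      Constr.sub τ1 τ2 ≠ Constr.sub τ2 τ1 →
      Constr.sub τ1 τ2 ∉ C' → Constr.sub τ2 τ1 ∉ C' →
      Step ds (insert (.sub τ1 τ2) (insert (.sub τ2 τ1) C'), σ)
        (insert (.eq τ1 τ2) C', σ)
  | r9 {a1 a a2 C' σ} :
      Constr.sub (.tvar a1) (.tvar a) ≠ Constr.sub (.tvar a) (.tvar a2) →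
      Constr.sub (.tvar a1) (.tvar a) ∉ C' →
      Constr.sub (.tvar a) (.tvar a2) ∉ C' →
      Step ds
        (insert (.sub (.tvar a1) (.tvar a))
          (insert (.sub (.tvar a) (.tvar a2)) C'), σ)
        (insert (.sub (.tvar a1) (.tvar a2))
          (C'.image (mapC (sub1 a (.tvar a2)))), comp (sub1 a (.tvar a2)) σ)
  | r10 {s g a a1 C' σ} :
      Constr.sub (.sort s g) (.tvar a) ≠ Constr.sub (.tvar a) (.tvar a1) →
      Constr.sub (.sort s g) (.tvar a) ∉ C' →
      Constr.sub (.tvar a) (.tvar a1) ∉ C' →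
      Step ds
        (insert (.sub (.sort s g) (.tvar a))
          (insert (.sub (.tvar a) (.tvar a1)) C'), σ)
        (insert (.sub (.sort s g) (.tvar a1))
          (C'.image (mapC (sub1 a (.tvar a1)))), comp (sub1 a (.tvar a1)) σ)
  | r11 {a1 a s g C' σ} :
      Constr.sub (.tvar a1) (.tvar a) ≠ Constr.sub (.tvar a) (.sort s g) →
      Constr.sub (.tvar a1) (.tvar a) ∉ C' →
      Constr.sub (.tvar a) (.sort s g) ∉ C' →
      Step ds
        (insert (.sub (.tvar a1) (.tvar a))
          (insert (.sub (.tvar a) (.sort s g)) C'), σ)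
        (insert (.sub (.tvar a1) (.sort s g))
          (C'.image (mapC (sub1 a (.tvar a1)))), comp (sub1 a (.tvar a1)) σ)
  | r12 {s1 g1 a s2 g2 C' σ} :
      Constr.sub (.sort s1 g1) (.tvar a) ≠ Constr.sub (.tvar a) (.sort s2 g2) →
      Constr.sub (.sort s1 g1) (.tvar a) ∉ C' →
      Constr.sub (.tvar a) (.sort s2 g2) ∉ C' →
      ds (.sort s1 g1) (.sort s2 g2) →
      Step ds
        (insert (.sub (.sort s1 g1) (.tvar a))
          (insert (.sub (.tvar a) (.sort s2 g2)) C'), σ)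
        (C'.image (mapC (sub1 a (.sort s2 g2))), comp (sub1 a (.sort s2 g2)) σ)
  | r13 {a τ C' σ} :
      Constr.sub (.tvar a) τ ∉ C' →
      (∀ c ∈ C', ¬ occursC a c) →
      Step ds (insert (.sub (.tvar a) τ) C', σ) (C', comp (sub1 a τ) σ)
  | r14 {a τ C' σ} :
      Constr.sub τ (.tvar a) ∉ C' →
      (∀ c ∈ C', ¬ occursC a c) →
      Step ds (insert (.sub τ (.tvar a)) C', σ) (C', comp (sub1 a τ) σ)

/-- The degree of a state: the number of constraints in `C` together with
the number of subtyping constraints in `C`. -/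
def degree (st : RState S F V) : ℕ × ℕ :=
  (st.1.card, (st.1.filter fun c => c.isSub = true).card)

/-- `σ` satisfies an equality `τ1 =_s τ2` iff `στ1 = στ2`, and a subtyping
constraint `τ1 <:_s τ2` iff `στ1 <:_s στ2` in the reflexive-transitive
subtyping closure `ds` of the declared context. -/
def SatC (ds : Ty S F V → Ty S F V → Prop) (σ : V → Ty S F V) :
    Constr S F V → Prop
  | .eq t1 t2 => applyTy σ t1 = applyTy σ t2
  | .sub t1 t2 => ds (applyTy σ t1) (applyTy σ t2)

section Aux
variable {S F V : Type} [DecidableEq S] [DecidableEq F] [DecidableEq V]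

lemma applyTy_id (t : Ty S F V) : applyTy (fun v => Ty.tvar v) t = t := by
  cases t <;> rfl

lemma applyTy_comp (σ1 σ2 : V → Ty S F V) (t : Ty S F V) :
    applyTy (comp σ1 σ2) t = applyTy σ1 (applyTy σ2 t) := by
  cases t <;> rfl

lemma comp_assoc (a b c : V → Ty S F V) :
    comp (comp a b) c = comp a (comp b c) := by
  funext v; exact applyTy_comp a b (c v)

lemma comp_tvar (θ : V → Ty S F V) : comp θ (fun v => Ty.tvar v) = θ := rfl

lemma applyTy_sub1_self (a : V) (τ : Ty S F V) : applyTy (sub1 a τ) τ = τ := by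
  cases τ with
  | tvar b =>
      show (if b = a then Ty.tvar b else Ty.tvar b) = Ty.tvar b
      split <;> rfl
  | sort s g => rfl
  | wt => rfl

lemma sub1_self (a : V) (τ : Ty S F V) : sub1 a τ a = τ := by simp [sub1]

lemma applyTy_sub1_of_ne {a : V} {τ t : Ty S F V} (h : t ≠ Ty.tvar a) :
    applyTy (sub1 a τ) t = t := by
  cases t with
  | tvar b =>
      show (if b = a then τ else Ty.tvar b) = Ty.tvar b
      rw [if_neg]; intro hba; exact h (by rw [hba])
  | sort s g => rfl
  | wt => rfl

lemma mapC_not_occurs {a : V} (τ : Ty S F V) {c : Constr S F V}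
    (h : ¬ occursC a c) : mapC (sub1 a τ) c = c := by
  cases c with
  | eq t1 t2 =>
      simp only [occursC, not_or] at h
      simp [mapC, applyTy_sub1_of_ne h.1, applyTy_sub1_of_ne h.2]
  | sub t1 t2 =>
      simp only [occursC, not_or] at h
      simp [mapC, applyTy_sub1_of_ne h.1, applyTy_sub1_of_ne h.2]

lemma satC_mapC_iff {ds : Ty S F V → Ty S F V → Prop}
    {θ ρ : V → Ty S F V} {c : Constr S F V} :
    SatC ds (comp θ ρ) c ↔ SatC ds θ (mapC ρ c) := by
  cases c <;> simp [SatC, mapC, applyTy_comp]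

lemma eq_self_sub1 (θ : V → Ty S F V) (a : V) (τ : Ty S F V) :
    applyTy (comp θ (sub1 a τ)) (Ty.tvar a) = applyTy (comp θ (sub1 a τ)) τ := by
  rw [applyTy_comp, applyTy_comp, applyTy_sub1_self]
  show applyTy θ (sub1 a τ a) = applyTy θ τ
  rw [sub1_self]

end Aux

/-- Partial correctness of constraint resolution: if the algorithm, run on
the constraint set `C₀` with the empty (identity) initial substitution,
returns a substitution `σ` (i.e. reaches, in finitely many steps, the state
with empty constraint set and accumulated substitution `σ`), then `σ` is a
solution for `C₀`: it satisfies every equality and every subtyping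
constraint in `C₀`. -/

theorem resolution_partial_correctness
    (ds : Ty S F V → Ty S F V → Prop)
    (hrefl : ∀ t, ds t t) (htrans : ∀ {t1 t2 t3}, ds t1 t2 → ds t2 t3 → ds t1 t3)
    (C0 : Finset (Constr S F V)) (σ : V → Ty S F V)
    (hrun : Relation.ReflTransGen (Step ds)
      (C0, fun v => Ty.tvar v) (∅, σ)) :
    ∀ c ∈ C0, SatC ds σ c := by
  have key : ∀ st : RState S F V, Relation.ReflTransGen (Step ds) st (∅, σ) →
      ∃ θ, σ = comp θ st.2 ∧ ∀ c ∈ st.1, SatC ds θ c := by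
    intro st h
    induction h using Relation.ReflTransGen.head_induction_on with
    | refl =>
      refine ⟨fun v => Ty.tvar v, ?_, by simp⟩
      funext v; exact (applyTy_id (σ v)).symm
    | head hstep htail ih =>
      obtain ⟨θ, hσ, hsat⟩ := ih
      cases hstep with
      | @r1 τ Cr s hn =>
        refine ⟨θ, hσ, ?_⟩
        intro c hc
        rcases Finset.mem_insert.mp hc with rfl | hc
        · rfl
        · exact hsat c hc
      | @r2 τ Cr s hn =>
        refine ⟨θ, hσ, ?_⟩
        intro c hc
        rcases Finset.mem_insert.mp hc with rfl | hc
        · exact hrefl _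
        · exact hsat c hc
      | @r3 s1 g1 s2 g2 Cr s hn hd =>
        refine ⟨θ, hσ, ?_⟩
        intro c hc
        rcases Finset.mem_insert.mp hc with rfl | hc
        · exact hd
        · exact hsat c hc
      | @r4 a τ Cr s hn =>
        refine ⟨comp θ (sub1 a τ), by rw [hσ, comp_assoc], ?_⟩
        intro c hc
        rcases Finset.mem_insert.mp hc with rfl | hc
        · exact eq_self_sub1 θ a τ
        · exact satC_mapC_iff.mpr (hsat _ (Finset.mem_image_of_mem _ hc))
      | @r5 a τ Cr s hn =>
        refine ⟨comp θ (sub1 a τ), by rw [hσ, comp_assoc], ?_⟩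
        intro c hc
        rcases Finset.mem_insert.mp hc with rfl | hc
        · exact (eq_self_sub1 θ a τ).symm
        · exact satC_mapC_iff.mpr (hsat _ (Finset.mem_image_of_mem _ hc))
      | @r6 s1 g1 s2 g2 s0 a Cr s hne hn1 hn2 hd1 hd2 =>
        refine ⟨θ, hσ, ?_⟩
        have hnew : ds (Ty.sort s0 none) (θ a) :=
          hsat _ (Finset.mem_insert_self _ _)
        intro c hc
        rcases Finset.mem_insert.mp hc with rfl | hc
        · exact htrans hd1 hnew
        rcases Finset.mem_insert.mp hc with rfl | hc
        · exact htrans hd2 hnew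
        · exact hsat c (Finset.mem_insert_of_mem hc)
      | @r7a s1 g1 s2 g2 a Cr s hne hn1 hn2 hd =>
        refine ⟨θ, hσ, ?_⟩
        have hkept : ds (θ a) (Ty.sort s1 g1) :=
          hsat _ (Finset.mem_insert_self _ _)
        intro c hc
        rcases Finset.mem_insert.mp hc with rfl | hc
        · exact hkept
        rcases Finset.mem_insert.mp hc with rfl | hc
        · exact htrans hkept hd
        · exact hsat c (Finset.mem_insert_of_mem hc)
      | @r7b s1 g1 s2 g2 a Cr s hne hn1 hn2 hd =>
        refine ⟨θ, hσ, ?_⟩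
        have hkept : ds (θ a) (Ty.sort s2 g2) :=
          hsat _ (Finset.mem_insert_self _ _)
        intro c hc
        rcases Finset.mem_insert.mp hc with rfl | hc
        · exact htrans hkept hd
        rcases Finset.mem_insert.mp hc with rfl | hc
        · exact hkept
        · exact hsat c (Finset.mem_insert_of_mem hc)
      | @r8 τ1 τ2 Cr s hne hn1 hn2 =>
        refine ⟨θ, hσ, ?_⟩
        have heq : applyTy θ τ1 = applyTy θ τ2 :=
          hsat _ (Finset.mem_insert_self _ _)
        intro c hc
        rcases Finset.mem_insert.mp hc with rfl | hc
        · show ds (applyTy θ τ1) (applyTy θ τ2); rw [heq]; exact hrefl _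
        rcases Finset.mem_insert.mp hc with rfl | hc
        · show ds (applyTy θ τ2) (applyTy θ τ1); rw [heq]; exact hrefl _
        · exact hsat c (Finset.mem_insert_of_mem hc)
      | @r9 x1 x2 a1 a a2 Cr s hne hn1 hn2 =>
        refine ⟨comp θ (sub1 a (Ty.tvar a2)), by rw [hσ, comp_assoc], ?_⟩
        have hkept : ds (θ a1) (θ a2) := hsat _ (Finset.mem_insert_self _ _)
        have ha : comp θ (sub1 a (Ty.tvar a2)) a = θ a2 := by
          show applyTy θ (sub1 a (Ty.tvar a2) a) = θ a2
          rw [sub1_self]; rfl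
        intro c hc
        rcases Finset.mem_insert.mp hc with rfl | hc
        · show ds (comp θ (sub1 a (Ty.tvar a2)) a1) (comp θ (sub1 a (Ty.tvar a2)) a)
          rw [ha]
          show ds (applyTy θ (if a1 = a then Ty.tvar a2 else Ty.tvar a1)) (θ a2)
          split
          · exact hrefl _
          · exact hkept
        rcases Finset.mem_insert.mp hc with rfl | hc
        · show ds (comp θ (sub1 a (Ty.tvar a2)) a) (comp θ (sub1 a (Ty.tvar a2)) a2)
          rw [ha]
          show ds (θ a2) (applyTy θ (if a2 = a then Ty.tvar a2 else Ty.tvar a2))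
          split <;> exact hrefl _
        · exact satC_mapC_iff.mpr
            (hsat _ (Finset.mem_insert_of_mem (Finset.mem_image_of_mem _ hc)))
      | @r10 s0 g a a1 Cr s hne hn1 hn2 =>
        refine ⟨comp θ (sub1 a (Ty.tvar a1)), by rw [hσ, comp_assoc], ?_⟩
        have hkept : ds (Ty.sort s0 g) (θ a1) := hsat _ (Finset.mem_insert_self _ _)
        have ha : comp θ (sub1 a (Ty.tvar a1)) a = θ a1 := by
          show applyTy θ (sub1 a (Ty.tvar a1) a) = θ a1
          rw [sub1_self]; rfl
        intro c hc
        rcases Finset.mem_insert.mp hc with rfl | hc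
        · show ds (Ty.sort s0 g) (comp θ (sub1 a (Ty.tvar a1)) a)
          rw [ha]; exact hkept
        rcases Finset.mem_insert.mp hc with rfl | hc
        · show ds (comp θ (sub1 a (Ty.tvar a1)) a) (comp θ (sub1 a (Ty.tvar a1)) a1)
          rw [ha]
          show ds (θ a1) (applyTy θ (if a1 = a then Ty.tvar a1 else Ty.tvar a1))
          split <;> exact hrefl _
        · exact satC_mapC_iff.mpr
            (hsat _ (Finset.mem_insert_of_mem (Finset.mem_image_of_mem _ hc)))
      | @r11 a1 a s0 g Cr s hne hn1 hn2 =>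
        refine ⟨comp θ (sub1 a (Ty.tvar a1)), by rw [hσ, comp_assoc], ?_⟩
        have hkept : ds (θ a1) (Ty.sort s0 g) := hsat _ (Finset.mem_insert_self _ _)
        have ha : comp θ (sub1 a (Ty.tvar a1)) a = θ a1 := by
          show applyTy θ (sub1 a (Ty.tvar a1) a) = θ a1
          rw [sub1_self]; rfl
        intro c hc
        rcases Finset.mem_insert.mp hc with rfl | hc
        · show ds (comp θ (sub1 a (Ty.tvar a1)) a1) (comp θ (sub1 a (Ty.tvar a1)) a)
          rw [ha]
          show ds (applyTy θ (if a1 = a then Ty.tvar a1 else Ty.tvar a1)) (θ a1)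
          split <;> exact hrefl _
        rcases Finset.mem_insert.mp hc with rfl | hc
        · show ds (comp θ (sub1 a (Ty.tvar a1)) a) (Ty.sort s0 g)
          rw [ha]; exact hkept
        · exact satC_mapC_iff.mpr
            (hsat _ (Finset.mem_insert_of_mem (Finset.mem_image_of_mem _ hc)))
      | @r12 s1 g1 a s2 g2 Cr s hne hn1 hn2 hd =>
        refine ⟨comp θ (sub1 a (Ty.sort s2 g2)), by rw [hσ, comp_assoc], ?_⟩
        have ha : comp θ (sub1 a (Ty.sort s2 g2)) a = Ty.sort s2 g2 := by
          show applyTy θ (sub1 a (Ty.sort s2 g2) a) = _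
          rw [sub1_self]; rfl
        intro c hc
        rcases Finset.mem_insert.mp hc with rfl | hc
        · show ds (Ty.sort s1 g1) (comp θ (sub1 a (Ty.sort s2 g2)) a)
          rw [ha]; exact hd
        rcases Finset.mem_insert.mp hc with rfl | hc
        · show ds (comp θ (sub1 a (Ty.sort s2 g2)) a) (Ty.sort s2 g2)
          rw [ha]; exact hrefl _
        · exact satC_mapC_iff.mpr (hsat _ (Finset.mem_image_of_mem _ hc))
      | @r13 a τ Cr s hn hocc =>
        refine ⟨comp θ (sub1 a τ), by rw [hσ, comp_assoc], ?_⟩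
        intro c hc
        rcases Finset.mem_insert.mp hc with rfl | hc
        · show ds (applyTy (comp θ (sub1 a τ)) (Ty.tvar a)) (applyTy (comp θ (sub1 a τ)) τ)
          rw [eq_self_sub1]; exact hrefl _
        · exact satC_mapC_iff.mpr (by rw [mapC_not_occurs τ (hocc c hc)]; exact hsat c hc)
      | @r14 a τ Cr s hn hocc =>
        refine ⟨comp θ (sub1 a τ), by rw [hσ, comp_assoc], ?_⟩
        intro c hc
        rcases Finset.mem_insert.mp hc with rfl | hc
        · show ds (applyTy (comp θ (sub1 a τ)) τ) (applyTy (comp θ (sub1 a τ)) (Ty.tvar a))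
          rw [eq_self_sub1]; exact hrefl _
        · exact satC_mapC_iff.mpr (by rw [mapC_not_occurs τ (hocc c hc)]; exact hsat c hc)
  obtain ⟨θ, hσ, hsat⟩ := key (C0, fun v => Ty.tvar v) hrun
  rw [comp_tvar] at hσ
  rw [hσ]
  exact hsat
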